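/- arXiv:2005.09281 — 2 statements merged into one kernel-verified Lean document; each statement's English description precedes it below -/
import Mathlib

section
/- Let Σ = {a_1 < a_2 < … < a_n} be a strictly totally ordered finite alphabet. The standard weight measure μ_Σ, i.e. the weight measure over Σ with values in (ℕ,+) given by μ_Σ(a_i) = i for all 1 ≤ i ≤ n, is gapfree, injective, and alphabetically ordered. -/
/-- The weight of a word: the sum of the weights of its letters. -/
def weight {α A : Type*} [AddCommMonoid A] [LinearOrder A] [IsOrderedCancelAddMonoid A] (μ : α → A) (w : List α) : A :=
  (w.map μ).sum

/-- The factor-weight function: `factorWeight μ w i` is the maximum weight of a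
length-`i` factor (contiguous subword) of `w`. -/
def factorWeight {α A : Type*} [AddCommMonoid A] [LinearOrder A] [IsOrderedCancelAddMonoid A] (μ : α → A)
    (w : List α) (i : ℕ) : A :=
  ((List.range (w.length + 1 - i)).map fun j => weight μ ((w.drop j).take i)).foldr max 0

/-- A word is `μ`-prefix normal if its factor-weight function agrees with its
prefix-weight function. -/
def PrefixNormal {α A : Type*} [AddCommMonoid A] [LinearOrder A] [IsOrderedCancelAddMonoid A] (μ : α → A)
    (w : List α) : Prop :=
  ∀ i ≤ w.length, factorWeight μ w i = weight μ (w.take i)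

/-- A weight measure is gapfree if for every word `w` and every `1 ≤ i ≤ |w|` there is a
letter `a` with `f_{w,μ}(i) = f_{w,μ}(i-1) + μ a`. -/
def Gapfree {α A : Type*} [AddCommMonoid A] [LinearOrder A] [IsOrderedCancelAddMonoid A] (μ : α → A) : Prop :=
  ∀ w : List α, ∀ i, 1 ≤ i → i ≤ w.length →
    ∃ a : α, factorWeight μ w i = factorWeight μ w (i - 1) + μ a

/-- The standard weight measure of a strictly totally ordered alphabet
`Σ = {a_1 < a_2 < … < a_n}` (modelled as `Fin n`): `μ_Σ(a_i) = i`. -/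
def standardWeightMeasure (n : ℕ) : Fin n → ℕ := fun a => (a : ℕ) + 1

/-
Positive weights make `f_{w,μ}` strictly increasing: an optimal factor of length `i` extends,
forwards or (if it ends the word) backwards, to a factor of length `i + 1`. Conversely, dropping
the last letter of an optimal factor of length `i + 1` leaves a factor of length `i`, so each
increment `f(i + 1) - f(i)` lies between `1` and the weight of some letter. Over `ℕ`, every such
value is a weight as soon as the weights form an initial segment `{1, …, m}`, as they do for the
standard weight measure.
-/

lemma List.foldr_max_mem_of_forall_le {A : Type*} [LinearOrder A] {l : List A} {b : A}
    (hne : l ≠ []) (hb : ∀ x ∈ l, b ≤ x) : l.foldr max b ∈ l := by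
  induction l with
  | nil => exact absurd rfl hne
  | cons y t ih =>
    rw [List.foldr_cons]
    rcases eq_or_ne t [] with rfl | ht
    · simpa using hb y List.mem_cons_self
    · rcases max_choice y (t.foldr max b) with h | h <;> rw [h]
      · exact List.mem_cons_self
      · exact List.mem_cons_of_mem _ (ih ht fun x hx => hb x (List.mem_cons_of_mem _ hx))

section FactorWeight

variable {α A : Type*} [AddCommMonoid A] [LinearOrder A] [IsOrderedCancelAddMonoid A]
  (μ : α → A)

lemma weight_cons (a : α) (w : List α) : weight μ (a :: w) = μ a + weight μ w := by
  simp [weight]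

lemma weight_take_add_one {w : List α} {i : ℕ} (hi : i < w.length) :
    weight μ (w.take (i + 1)) = weight μ (w.take i) + μ w[i] := by
  rw [weight, weight, List.take_add_one, List.getElem?_eq_getElem hi, List.map_append,
    List.sum_append]
  simp

variable {μ}

lemma weight_nonneg (hμ : ∀ a, 0 ≤ μ a) (w : List α) : 0 ≤ weight μ w :=
  List.sum_nonneg fun _ hx => by
    obtain ⟨a, -, rfl⟩ := List.mem_map.1 hx
    exact hμ a

lemma weight_factor_le_factorWeight {w : List α} {i j : ℕ} (h : j + i ≤ w.length) :
    weight μ ((w.drop j).take i) ≤ factorWeight μ w i :=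
  List.le_max_of_le' 0 (List.mem_map.2 ⟨j, List.mem_range.2 (by omega), rfl⟩) le_rfl

lemma exists_factorWeight_eq (hμ : ∀ a, 0 ≤ μ a) {w : List α} {i : ℕ} (hi : i ≤ w.length) :
    ∃ j, j + i ≤ w.length ∧ factorWeight μ w i = weight μ ((w.drop j).take i) := by
  set L := (List.range (w.length + 1 - i)).map fun j => weight μ ((w.drop j).take i)
  have hne : L ≠ [] := by
    simp only [L, ne_eq, List.map_eq_nil_iff, List.range_eq_nil]
    omega
  have hnonneg : ∀ x ∈ L, 0 ≤ x := fun x hx => by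
    obtain ⟨j, -, rfl⟩ := List.mem_map.1 hx
    exact weight_nonneg hμ _
  obtain ⟨j, hj, heq⟩ := List.mem_map.1 (List.foldr_max_mem_of_forall_le hne hnonneg)
  exact ⟨j, by have := List.mem_range.1 hj; omega, heq.symm⟩

lemma factorWeight_lt_factorWeight_succ (hμ : ∀ a, 0 < μ a) {w : List α} {i : ℕ}
    (hi : i < w.length) : factorWeight μ w i < factorWeight μ w (i + 1) := by
  obtain ⟨j, hj, hopt⟩ := exists_factorWeight_eq (fun a => (hμ a).le) hi.le
  rw [hopt]
  by_cases hfwd : j + (i + 1) ≤ w.length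
  · have hlen : i < (w.drop j).length := by rw [List.length_drop]; omega
    calc weight μ ((w.drop j).take i)
        < weight μ ((w.drop j).take i) + μ (w.drop j)[i] := lt_add_of_pos_right _ (hμ _)
      _ = weight μ ((w.drop j).take (i + 1)) := (weight_take_add_one μ hlen).symm
      _ ≤ factorWeight μ w (i + 1) := weight_factor_le_factorWeight hfwd
  · obtain ⟨k, rfl⟩ : ∃ k, j = k + 1 := Nat.exists_eq_succ_of_ne_zero (by omega)
    have hk : k < w.length := by omega
    calc weight μ ((w.drop (k + 1)).take i)
        < μ w[k] + weight μ ((w.drop (k + 1)).take i) := lt_add_of_pos_left _ (hμ _)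
      _ = weight μ ((w.drop k).take (i + 1)) := by
        rw [List.drop_eq_getElem_cons hk, List.take_succ_cons, weight_cons]
      _ ≤ factorWeight μ w (i + 1) := weight_factor_le_factorWeight (by omega)

lemma exists_factorWeight_succ_le (hμ : ∀ a, 0 ≤ μ a) {w : List α} {i : ℕ}
    (hi : i < w.length) : ∃ a, factorWeight μ w (i + 1) ≤ factorWeight μ w i + μ a := by
  obtain ⟨j, hj, hopt⟩ := exists_factorWeight_eq hμ hi
  have hlen : i < (w.drop j).length := by rw [List.length_drop]; omega
  refine ⟨(w.drop j)[i], ?_⟩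
  rw [hopt, weight_take_add_one μ hlen]
  exact add_le_add_left (weight_factor_le_factorWeight (by omega)) _

end FactorWeight

theorem gapfree_of_forall_exists_eq {α : Type*} {μ : α → ℕ} (hμ : ∀ a, 0 < μ a)
    (hweights : ∀ a k, 0 < k → k ≤ μ a → ∃ b, μ b = k) : Gapfree μ := by
  intro w i hi hiw
  obtain ⟨k, rfl⟩ := Nat.exists_eq_add_of_le' hi
  rw [Nat.add_sub_cancel]
  have hlt := factorWeight_lt_factorWeight_succ hμ (w := w) (i := k) (by omega)
  obtain ⟨a, hle⟩ := exists_factorWeight_succ_le (fun a => (hμ a).le) (w := w) (i := k) (by omega)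
  obtain ⟨b, hb⟩ := hweights a (factorWeight μ w (k + 1) - factorWeight μ w k) (by omega) (by omega)
  exact ⟨b, by omega⟩

lemma standardWeightMeasure_strictMono (n : ℕ) : StrictMono (standardWeightMeasure n) :=
  fun _ _ h => Nat.succ_lt_succ h

lemma exists_standardWeightMeasure_eq {n k : ℕ} (hk : 0 < k) (hkn : k ≤ n) :
    ∃ a, standardWeightMeasure n a = k :=
  ⟨⟨k - 1, by omega⟩, by simp only [standardWeightMeasure]; omega⟩

/-- The standard weight measure is gapfree, injective and alphabetically ordered. -/
theorem standardWeightMeasure_gapfree_injective_monotone (n : ℕ) :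
    Gapfree (standardWeightMeasure n) ∧
    Function.Injective (standardWeightMeasure n) ∧
    (∀ a b : Fin n, a ≤ b → standardWeightMeasure n a ≤ standardWeightMeasure n b) := by
  refine ⟨?_, (standardWeightMeasure_strictMono n).injective,
    fun _ _ h => (standardWeightMeasure_strictMono n).monotone h⟩
  refine gapfree_of_forall_exists_eq (fun _ => Nat.succ_pos _) fun a k hk hka => ?_
  exact exists_standardWeightMeasure_eq hk (hka.trans a.isLt)
end

section
/- Subset prefix normality is expressible by weighted prefix normality: let Σ be a finite alphabet, X ⊆ Σ, and let μ be the weight measure over Σ with values in (ℕ,+) given by μ(x) = 2 for x ∈ X and μ(y) = 1 for y ∈ Σ \ X. Then for every word w ∈ Σ*, w is μ-prefix normal if and only if w is X-prefix normal, i.e. for every 0 ≤ i ≤ |w| the maximum number of letters from X in a length-i factor of w equals the number of letters from X in the length-i prefix of w. -/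
/-- The maximum-`X`-factor function: the maximum number of letters from `X` occurring
in a length-`i` factor of `w`. -/
def maxSubsetCount {α : Type*} [DecidableEq α] (X : Finset α) (w : List α) (i : ℕ) : ℕ :=
  ((List.range (w.length + 1 - i)).map
    fun j => ((w.drop j).take i).countP (fun a => a ∈ X)).foldr max 0

/-! A word of length `i` with `k` letters from `X` has weight `i + k`, so both the factor-weight
and the prefix-weight function of `w` exceed their `X`-counting counterparts by exactly `i`. -/

theorem List.foldr_max_zero_map_add (c : ℕ) {l : List ℕ} (hl : l ≠ []) :
    (l.map (c + ·)).foldr max 0 = c + l.foldr max 0 := by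
  induction l with
  | nil => exact absurd rfl hl
  | cons a t ih =>
    cases t with
    | nil => simp
    | cons b t =>
      simp only [List.map_cons, List.foldr_cons] at ih ⊢
      rw [ih (List.cons_ne_nil b t), max_add_add_left]

section
variable {α : Type*} [DecidableEq α] (X : Finset α)

theorem weight_ite_two_one (u : List α) :
    weight (fun a : α => if a ∈ X then 2 else 1) u = u.length + u.countP (· ∈ X) := by
  induction u with
  | nil => rfl
  | cons a u ih =>
    simp only [weight, List.map_cons, List.sum_cons, List.length_cons, List.countP_cons] at ih ⊢
    by_cases ha : a ∈ X <;> simp [ha, ih] <;> omega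

theorem factorWeight_ite_two_one {w : List α} {i : ℕ} (hi : i ≤ w.length) :
    factorWeight (fun a : α => if a ∈ X then 2 else 1) w i = i + maxSubsetCount X w i := by
  have hfactor : ∀ j ∈ List.range (w.length + 1 - i),
      weight (fun a : α => if a ∈ X then 2 else 1) ((w.drop j).take i)
        = i + ((w.drop j).take i).countP (· ∈ X) := by
    intro j hj
    have hlen : ((w.drop j).take i).length = i := by
      simp only [List.length_take, List.length_drop]
      have := List.mem_range.1 hj
      omega
    rw [weight_ite_two_one, hlen]
  have hstarts : (List.range (w.length + 1 - i)).map
      (fun j => ((w.drop j).take i).countP (· ∈ X)) ≠ [] := by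
    simp only [ne_eq, List.map_eq_nil_iff, List.range_eq_nil]
    omega
  rw [factorWeight, maxSubsetCount, List.map_congr_left hfactor,
    ← List.foldr_max_zero_map_add i hstarts, List.map_map]
  rfl

end

theorem subset_pn_iff_weighted_pn_general {α : Type*} [DecidableEq α]
    (X : Finset α) (w : List α) :
    PrefixNormal (fun a : α => if a ∈ X then 2 else 1) w ↔
      ∀ i ≤ w.length, maxSubsetCount X w i = (w.take i).countP (fun a => a ∈ X) :=
  forall₂_congr fun _ hi => by
    rw [factorWeight_ite_two_one X hi, weight_ite_two_one, List.length_take_of_le hi, add_right_inj]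

/-- Subset prefix normality is expressible by weighted prefix normality: with the
weight measure `μ(x) = 2` for `x ∈ X` and `μ(y) = 1` for `y ∉ X` (values in `(ℕ,+)`),
a word is `μ`-prefix normal iff it is `X`-prefix normal. -/
theorem subset_pn_iff_weighted_pn {α : Type*} [Fintype α] [DecidableEq α]
    (X : Finset α) (w : List α) :
    PrefixNormal (fun a : α => if a ∈ X then 2 else 1) w ↔
      ∀ i ≤ w.length, maxSubsetCount X w i = (w.take i).countP (fun a => a ∈ X) :=
  subset_pn_iff_weighted_pn_general X w
end
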